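/- arXiv:1603.02401 — 3 statements merged into one kernel-verified Lean document; each statement's English description precedes it below -/
import Mathlib

section
/- There exist absolute constants c, C > 0 such that for every positive integer n and every a = (a_i)_{i=1}^n ∈ ℝ^n, if g_1, …, g_n are independent standard Gaussian random variables and (a_i^*)_{i≤n} denotes the decreasing rearrangement of (|a_i|)_{i≤n}, then c · max_{i≤n} √(log(i+3)) · a_i^* ≤ E max_{i≤n} |a_i g_i| ≤ C · max_{i≤n} √(log(i+3)) · a_i^*. -/
/-!
Upper bound: if `M` bounds every `L_k a*_k`, where `L_k = √(log (k + 4))`, then pointwise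
`a*_k |g| ≤ 2M + (M / L_k) (|g| - 2 L_k)⁺`. Integrating `(|g| - b)⁺ ≤ e^{b|g| - b²} / b` against
the Gaussian moment generating function gives `E (|g| - 2 L_k)⁺ / L_k ≤ e^{-2 L_k²} = (k + 4)⁻²`,
which is summable; so `E max ≤ (5/2) M`.

Lower bound: fix `k`. If `|g_j| ≥ t` for one of the `k + 1` largest coefficients, then the maximum
is at least `a*_k t`, and by independence this happens with probability
`1 - (1 - P(|g| ≥ t))^{k+1}`. Markov's inequality turns this into a bound on the expectation.
For `L_k ≤ 4` take `t = 1`; otherwise take `t = L_k / 2 - 1`, for which `(k + 1) P(|g| ≥ t) ≥ 1`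
by the elementary tail bound `P(|g| ≥ t) ≥ φ(t + 1)`, so the probability is at least `1/2`.
-/

open MeasureTheory ProbabilityTheory Real Finset

/-- Indices are zero-based: `gaussianWeight k` is the paper's `√(log (i + 3))` at `i = k + 1`. -/
noncomputable def gaussianWeight (k : ℕ) : ℝ := √(log ((k : ℝ) + 1 + 3))

lemma one_le_log_add_four (k : ℕ) : 1 ≤ log ((k : ℝ) + 1 + 3) := by
  rw [le_log_iff_exp_le (by positivity)]
  linarith [exp_one_lt_d9, (Nat.cast_nonneg k : (0 : ℝ) ≤ k)]

lemma gaussianWeight_sq (k : ℕ) : gaussianWeight k ^ 2 = log ((k : ℝ) + 1 + 3) :=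
  sq_sqrt (zero_le_one.trans (one_le_log_add_four k))

lemma one_le_gaussianWeight (k : ℕ) : 1 ≤ gaussianWeight k :=
  one_le_sqrt.mpr (one_le_log_add_four k)

lemma gaussianWeight_pos (k : ℕ) : 0 < gaussianWeight k :=
  zero_lt_one.trans_le (one_le_gaussianWeight k)

lemma exp_gaussianWeight_sq (k : ℕ) : exp (gaussianWeight k ^ 2) = (k : ℝ) + 1 + 3 := by
  rw [gaussianWeight_sq, exp_log (by positivity)]

lemma exp_neg_two_mul_gaussianWeight_sq (k : ℕ) :
    exp (-2 * gaussianWeight k ^ 2) = (((k : ℝ) + 1 + 3) ^ 2)⁻¹ := by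
  rw [neg_mul, exp_neg, two_mul, exp_add, exp_gaussianWeight_sq, sq]

lemma sum_inv_sq_add_four_le (n : ℕ) : ∑ k : Fin n, (((k : ℝ) + 1 + 3) ^ 2)⁻¹ ≤ 1 / 2 := by
  calc ∑ k : Fin n, (((k : ℝ) + 1 + 3) ^ 2)⁻¹
      = ∑ i ∈ Ioo 3 (n + 4), ((i : ℝ) ^ 2)⁻¹ := by
        rw [Fin.sum_univ_eq_sum_range (fun k ↦ (((k : ℝ) + 1 + 3) ^ 2)⁻¹),
          ← Ico_add_one_left_eq_Ioo, sum_Ico_eq_sum_range]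
        exact sum_congr (by simp) fun k _ ↦ by push_cast; ring
    _ ≤ 2 / (3 + 1) := sum_Ioo_inv_sq_le 3 (n + 4)
    _ = 1 / 2 := by norm_num

lemma mul_abs_le_of_mul_le {b L M : ℝ} (hb : 0 ≤ b) (hL : 0 < L) (hbM : L * b ≤ M) (x : ℝ) :
    b * |x| ≤ 2 * M + M / L * max (|x| - 2 * L) 0 := by
  have hbM' : b ≤ M / L := by rw [le_div_iff₀ hL]; linarith
  calc b * |x| ≤ M / L * (2 * L + max (|x| - 2 * L) 0) :=
        mul_le_mul hbM' (by linarith [le_max_left (|x| - 2 * L) 0]) (abs_nonneg x) (hb.trans hbM')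
    _ = 2 * M + M / L * max (|x| - 2 * L) 0 := by field_simp

lemma le_one_sub_one_sub_pow {p : ℝ} (hp0 : 0 ≤ p) (hp1 : p ≤ 1) {m : ℕ} (hm : m ≠ 0) :
    p ≤ 1 - (1 - p) ^ m := by
  linarith [pow_le_of_le_one (sub_nonneg.mpr hp1) (by linarith) hm]

lemma half_le_one_sub_one_sub_pow {p : ℝ} (hp1 : p ≤ 1) {m : ℕ}
    (hmp : 1 ≤ m * p) : 1 / 2 ≤ 1 - (1 - p) ^ m := by
  have h_exp : (1 - p) ^ m ≤ exp (-1) :=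
    calc (1 - p) ^ m ≤ exp (-p) ^ m := by
          gcongr; linarith [add_one_le_exp (-p)]
      _ = exp (-(m * p)) := by rw [← exp_nat_mul]; ring_nf
      _ ≤ exp (-1) := by gcongr
  linarith [exp_neg_one_lt_half]

lemma gaussianPDFReal_zero_one (x : ℝ) :
    gaussianPDFReal 0 1 x = (√(2 * π))⁻¹ * exp (-x ^ 2 / 2) := by
  simp [gaussianPDFReal]

lemma sqrt_two_mul_pi_le_three : √(2 * π) ≤ 3 := by
  rw [sqrt_le_left (by norm_num)]; linarith [pi_lt_four]

lemma one_div_twentyFive_le_gaussianPDFReal_two : 1 / 25 ≤ gaussianPDFReal 0 1 2 := by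
  have h_exp : exp 2 ≤ 8 := by
    rw [show (2 : ℝ) = 1 + 1 by norm_num, exp_add]; nlinarith [exp_one_lt_d9, exp_pos 1]
  rw [gaussianPDFReal_zero_one, show -(2 : ℝ) ^ 2 / 2 = -2 by norm_num, exp_neg, ← mul_inv,
    one_div]
  gcongr
  nlinarith [sqrt_two_mul_pi_le_three, sqrt_nonneg (2 * π), exp_pos 2]

lemma one_le_mul_gaussianPDFReal_gaussianWeight_div_two {k : ℕ} (hk : 4 < gaussianWeight k) :
    1 ≤ ((k : ℝ) + 1) * gaussianPDFReal 0 1 (gaussianWeight k / 2) := by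
  set L := gaussianWeight k
  have h_split : exp (L ^ 2) = exp (7 * L ^ 2 / 8) * exp (L ^ 2 / 8) := by
    rw [← exp_add]; ring_nf
  have h_big : 15 ≤ exp (7 * L ^ 2 / 8) := by nlinarith [add_one_le_exp (7 * L ^ 2 / 8)]
  have h_one : 1 ≤ exp (L ^ 2 / 8) := one_le_exp (by positivity)
  have h_k : (k : ℝ) + 1 = exp (7 * L ^ 2 / 8) * exp (L ^ 2 / 8) - 3 := by
    rw [← h_split, exp_gaussianWeight_sq]; ring
  rw [gaussianPDFReal_zero_one, show -(L / 2) ^ 2 / 2 = -(L ^ 2 / 8) by ring, exp_neg, ← mul_inv,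
    ← div_eq_mul_inv, one_le_div (by positivity), h_k]
  nlinarith [sqrt_two_mul_pi_le_three]

lemma gaussianPDFReal_add_one_le_measureReal {t : ℝ} (ht : 0 ≤ t) :
    gaussianPDFReal 0 1 (t + 1) ≤ (gaussianReal 0 1).real {x | t ≤ |x|} := by
  have h_pdf : ∀ x ∈ Set.Icc t (t + 1), gaussianPDFReal 0 1 (t + 1) ≤ gaussianPDFReal 0 1 x := by
    intro x ⟨htx, hxt⟩
    simp only [gaussianPDFReal_zero_one]
    gcongr
    nlinarith
  calc gaussianPDFReal 0 1 (t + 1)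
      = gaussianPDFReal 0 1 (t + 1) * volume.real (Set.Icc t (t + 1)) := by simp
    _ ≤ ∫ x in Set.Icc t (t + 1), gaussianPDFReal 0 1 x :=
        setIntegral_ge_of_const_le_real measurableSet_Icc (by simp) h_pdf
          (integrable_gaussianPDFReal 0 1).integrableOn
    _ = (gaussianReal 0 1).real (Set.Icc t (t + 1)) := by
        rw [measureReal_def, gaussianReal_apply_eq_integral 0 one_ne_zero,
          ENNReal.toReal_ofReal (setIntegral_nonneg measurableSet_Icc
            fun x _ ↦ gaussianPDFReal_nonneg 0 1 x)]
    _ ≤ (gaussianReal 0 1).real {x | t ≤ |x|} :=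
        measureReal_mono fun x hx ↦ hx.1.trans (le_abs_self x)

lemma integral_exp_mul_gaussianReal (t : ℝ) :
    ∫ x, exp (t * x) ∂gaussianReal 0 1 = exp (t ^ 2 / 2) := by
  simpa [mgf] using congrFun (mgf_id_gaussianReal (μ := 0) (v := 1)) t

lemma max_abs_sub_le_exp {b : ℝ} (hb : 0 < b) (x : ℝ) :
    max (|x| - b) 0 ≤ (exp (b * x) + exp (-b * x)) * exp (-b ^ 2) / b := by
  rw [le_div_iff₀ hb, max_mul_of_nonneg _ _ hb.le, zero_mul]
  have h_abs : exp (b * |x|) ≤ exp (b * x) + exp (-b * x) := by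
    rcases abs_cases x with ⟨hx, -⟩ | ⟨hx, -⟩
    · rw [hx]; linarith [exp_pos (-b * x)]
    · rw [hx, mul_neg, ← neg_mul]; linarith [exp_pos (b * x)]
  have h_lin : (|x| - b) * b ≤ exp (b * |x|) * exp (-b ^ 2) := by
    rw [← exp_add]; linarith [add_one_le_exp (b * |x| + -b ^ 2)]
  exact max_le (h_lin.trans (mul_le_mul_of_nonneg_right h_abs (exp_pos _).le)) (by positivity)

lemma integrable_exp_bound_gaussianReal (b : ℝ) :
    Integrable (fun x ↦ (exp (b * x) + exp (-b * x)) * exp (-b ^ 2) / b) (gaussianReal 0 1) :=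
  ((integrable_exp_mul_gaussianReal b).add (integrable_exp_mul_gaussianReal (-b))).mul_const _
    |>.div_const _

lemma integrable_max_abs_sub_gaussianReal {b : ℝ} (hb : 0 < b) :
    Integrable (fun x ↦ max (|x| - b) 0) (gaussianReal 0 1) :=
  (integrable_exp_bound_gaussianReal b).mono' (by fun_prop) <| .of_forall fun x ↦ by
    rw [norm_of_nonneg (le_max_right _ _)]
    exact max_abs_sub_le_exp hb x

lemma integral_max_abs_sub_le {b : ℝ} (hb : 0 < b) :
    ∫ x, max (|x| - b) 0 ∂gaussianReal 0 1 ≤ 2 * exp (-b ^ 2 / 2) / b := by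
  calc ∫ x, max (|x| - b) 0 ∂gaussianReal 0 1
      ≤ ∫ x, (exp (b * x) + exp (-b * x)) * exp (-b ^ 2) / b ∂gaussianReal 0 1 :=
        integral_mono (integrable_max_abs_sub_gaussianReal hb)
          (integrable_exp_bound_gaussianReal b) (max_abs_sub_le_exp hb)
    _ = (exp (b ^ 2 / 2) + exp (b ^ 2 / 2)) * exp (-b ^ 2) / b := by
        rw [integral_div, integral_mul_const, integral_add (integrable_exp_mul_gaussianReal b)
          (integrable_exp_mul_gaussianReal (-b)), integral_exp_mul_gaussianReal,
          integral_exp_mul_gaussianReal, neg_sq]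
    _ = 2 * exp (-b ^ 2 / 2) / b := by
        rw [← two_mul, mul_assoc, ← exp_add]; ring_nf

section

variable {Ω : Type*} [MeasurableSpace Ω] {μ : Measure Ω}

lemma ProbabilityTheory.HasLaw.integrable_comp {β : Type*} [MeasurableSpace β] {ν : Measure β}
    {X : Ω → β} (hX : HasLaw X ν μ) {f : β → ℝ} (hf : Integrable f ν) :
    Integrable (fun ω ↦ f (X ω)) μ := by
  rw [← hX.map_eq] at hf
  exact hf.comp_aemeasurable hX.aemeasurable

lemma integrable_iSup_abs {ι : Type*} [Fintype ι] {f : ι → Ω → ℝ}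
    (hf : ∀ i, Integrable (f i) μ) : Integrable (fun ω ↦ ⨆ i, |f i ω|) μ :=
  (integrable_finsetSum univ fun i _ ↦ (hf i).abs).mono'
    (AEMeasurable.iSup fun i ↦ (hf i).aemeasurable.abs).aestronglyMeasurable <|
    .of_forall fun ω ↦ by
      rw [norm_of_nonneg (Real.iSup_nonneg fun i ↦ abs_nonneg _)]
      exact Real.iSup_le (fun i ↦ single_le_sum (fun j _ ↦ abs_nonneg (f j ω)) (mem_univ i))
        (sum_nonneg fun j _ ↦ abs_nonneg _)

lemma measureReal_biUnion_preimage_eq_of_iIndepFun [IsProbabilityMeasure μ] {ι β : Type*}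
    [MeasurableSpace β] {ν : Measure β} [IsProbabilityMeasure ν] {h : ι → Ω → β}
    (hh : ∀ i, HasLaw (h i) ν μ) (hind : iIndepFun h μ) (S : Finset ι) {A : Set β}
    (hA : MeasurableSet A) :
    μ.real (⋃ i ∈ S, h i ⁻¹' A) = 1 - (1 - ν.real A) ^ #S := by
  have h_compl : ⋃ i ∈ S, h i ⁻¹' A = (⋂ i ∈ S, h i ⁻¹' Aᶜ)ᶜ := by
    simp [Set.compl_iInter]
  rw [h_compl, probReal_compl_eq_one_sub₀ (S.nullMeasurableSet_biInter fun i _ ↦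
    (hh i).aemeasurable.nullMeasurable hA.compl), measureReal_def,
    hind.meas_biInter fun i _ ↦ ⟨Aᶜ, hA.compl, rfl⟩,
    prod_congr rfl fun i _ ↦ by
      rw [← Measure.map_apply_of_aemeasurable (hh i).aemeasurable hA.compl, (hh i).map_eq],
    prod_const, ENNReal.toReal_pow, ← measureReal_def, probReal_compl_eq_one_sub hA]

lemma integral_max_abs_sub_two_mul_gaussianWeight_le {X : Ω → ℝ}
    (hX : HasLaw X (gaussianReal 0 1) μ) (k : ℕ) :
    (∫ ω, max (|X ω| - 2 * gaussianWeight k) 0 ∂μ) / gaussianWeight k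
      ≤ (((k : ℝ) + 1 + 3) ^ 2)⁻¹ := by
  have hL := gaussianWeight_pos k
  rw [show ∫ ω, max (|X ω| - 2 * gaussianWeight k) 0 ∂μ
      = ∫ x, max (|x| - 2 * gaussianWeight k) 0 ∂gaussianReal 0 1 from
    hX.integral_comp (f := fun x ↦ max (|x| - 2 * gaussianWeight k) 0) (by fun_prop)]
  calc (∫ x, max (|x| - 2 * gaussianWeight k) 0 ∂gaussianReal 0 1) / gaussianWeight k
      ≤ 2 * exp (-(2 * gaussianWeight k) ^ 2 / 2) / (2 * gaussianWeight k) / gaussianWeight k := by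
        gcongr; exact integral_max_abs_sub_le (by positivity)
    _ = exp (-2 * gaussianWeight k ^ 2) / gaussianWeight k ^ 2 := by field_simp
    _ ≤ exp (-2 * gaussianWeight k ^ 2) :=
        div_le_self (exp_pos _).le (one_le_pow₀ (one_le_gaussianWeight k))
    _ = (((k : ℝ) + 1 + 3) ^ 2)⁻¹ := exp_neg_two_mul_gaussianWeight_sq k

lemma integral_iSup_mul_abs_le [IsProbabilityMeasure μ] {n : ℕ} {b : Fin n → ℝ}
    {h : Fin n → Ω → ℝ} (hb : ∀ k, 0 ≤ b k) (hh : ∀ k, HasLaw (h k) (gaussianReal 0 1) μ) :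
    ∫ ω, ⨆ k, b k * |h k ω| ∂μ ≤ 5 / 2 * ⨆ k : Fin n, gaussianWeight k * b k := by
  set M := ⨆ k : Fin n, gaussianWeight k * b k
  have hM : ∀ k : Fin n, gaussianWeight k * b k ≤ M := le_ciSup (Set.finite_range _).bddAbove
  have hM0 : 0 ≤ M := Real.iSup_nonneg fun k ↦ mul_nonneg (gaussianWeight_pos k).le (hb k)
  set excess : Fin n → Ω → ℝ :=
    fun k ω ↦ M / gaussianWeight k * max (|h k ω| - 2 * gaussianWeight k) 0
  have h_excess_nonneg : ∀ k ω, 0 ≤ excess k ω := fun k ω ↦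
    mul_nonneg (div_nonneg hM0 (gaussianWeight_pos k).le) (le_max_right _ _)
  have h_int : ∀ k, Integrable (excess k) μ := fun k ↦
    ((hh k).integrable_comp (integrable_max_abs_sub_gaussianReal
      (by linarith [gaussianWeight_pos k]))).const_mul _
  have h_excess : ∀ k : Fin n, ∫ ω, excess k ω ∂μ ≤ M * (((k : ℝ) + 1 + 3) ^ 2)⁻¹ := fun k ↦ by
    rw [integral_const_mul, div_mul_eq_mul_div, mul_div_assoc]
    exact mul_le_mul_of_nonneg_left
      (integral_max_abs_sub_two_mul_gaussianWeight_le (hh k) k) hM0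
  calc ∫ ω, ⨆ k, b k * |h k ω| ∂μ ≤ ∫ ω, 2 * M + ∑ k, excess k ω ∂μ := by
        refine integral_mono_of_nonneg (.of_forall fun ω ↦ Real.iSup_nonneg fun k ↦ ?_)
          ((integrable_const _).add (integrable_finsetSum _ fun k _ ↦ h_int k))
          (.of_forall fun ω ↦ Real.iSup_le (fun k ↦ ?_) ?_)
        · exact mul_nonneg (hb k) (abs_nonneg _)
        · exact (mul_abs_le_of_mul_le (hb k) (gaussianWeight_pos k) (hM k) _).trans
            (add_le_add_right (single_le_sum (f := fun j ↦ excess j ω)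
              (fun j _ ↦ h_excess_nonneg j ω) (mem_univ k)) _)
        · exact add_nonneg (by positivity) (sum_nonneg fun j _ ↦ h_excess_nonneg j ω)
    _ = 2 * M + ∑ k, ∫ ω, excess k ω ∂μ := by
        rw [integral_add (integrable_const _) (integrable_finsetSum _ fun k _ ↦ h_int k),
          integral_finsetSum _ fun k _ ↦ h_int k]
        simp
    _ ≤ 2 * M + ∑ k : Fin n, M * (((k : ℝ) + 1 + 3) ^ 2)⁻¹ := by
        gcongr with k; exact h_excess k
    _ ≤ 2 * M + M * (1 / 2) := by
        rw [← mul_sum]; gcongr; exact sum_inv_sq_add_four_le n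
    _ = 5 / 2 * M := by ring

lemma mul_measureReal_le_integral_iSup_mul_abs [IsFiniteMeasure μ] {n : ℕ} {b : Fin n → ℝ}
    {h : Fin n → Ω → ℝ} (hb : Antitone b) (hb0 : ∀ k, 0 ≤ b k)
    (hint : Integrable (fun ω ↦ ⨆ j, b j * |h j ω|) μ) (k : Fin n) {t : ℝ} (ht : 0 ≤ t) :
    b k * t * μ.real (⋃ j ∈ Iic k, h j ⁻¹' {x | t ≤ |x|}) ≤ ∫ ω, ⨆ j, b j * |h j ω| ∂μ := by
  refine (mul_le_mul_of_nonneg_left (measureReal_mono ?_) (mul_nonneg (hb0 k) ht)).trans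
    (mul_meas_ge_le_integral_of_nonneg (.of_forall fun ω ↦ Real.iSup_nonneg fun j ↦
      mul_nonneg (hb0 j) (abs_nonneg _)) hint _)
  intro ω hω
  simp only [Set.mem_iUnion, Set.mem_preimage, mem_Iic] at hω
  obtain ⟨j, hjk, htj⟩ := hω
  exact (mul_le_mul (hb hjk) htj ht (hb0 j)).trans
    (le_ciSup (f := fun i ↦ b i * |h i ω|) (Set.finite_range _).bddAbove j)

lemma gaussianWeight_mul_le_integral_iSup_mul_abs [IsProbabilityMeasure μ] {n : ℕ}
    {b : Fin n → ℝ} {h : Fin n → Ω → ℝ} (hb : Antitone b) (hb0 : ∀ k, 0 ≤ b k)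
    (hh : ∀ k, HasLaw (h k) (gaussianReal 0 1) μ) (hind : iIndepFun h μ) (k : Fin n) :
    gaussianWeight k * b k ≤ 100 * ∫ ω, ⨆ j, b j * |h j ω| ∂μ := by
  set Y := ∫ ω, ⨆ j, b j * |h j ω| ∂μ
  have hint : Integrable (fun ω ↦ ⨆ j, b j * |h j ω|) μ := by
    simpa only [id, abs_mul, abs_of_nonneg (hb0 _)] using integrable_iSup_abs fun j ↦
      ((hh j).integrable_comp ((memLp_id_gaussianReal 1).integrable le_rfl)).const_mul (b j)
  have hY : 0 ≤ Y := integral_nonneg fun ω ↦ Real.iSup_nonneg fun j ↦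
    mul_nonneg (hb0 j) (abs_nonneg _)
  set p : ℝ → ℝ := fun t ↦ (gaussianReal 0 1).real {x | t ≤ |x|}
  have h_tail : ∀ t, 0 ≤ t → b k * t * (1 - (1 - p t) ^ ((k : ℕ) + 1)) ≤ Y := fun t ht ↦ by
    have := mul_measureReal_le_integral_iSup_mul_abs hb hb0 hint k ht
    rwa [measureReal_biUnion_preimage_eq_of_iIndepFun hh hind _
      (measurableSet_le measurable_const measurable_abs), Fin.card_Iic] at this
  rcases le_or_gt (gaussianWeight k) 4 with hk | hk
  · have hp : 1 / 25 ≤ 1 - (1 - p 1) ^ ((k : ℕ) + 1) :=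
      calc (1 : ℝ) / 25 ≤ gaussianPDFReal 0 1 (1 + 1) := by
            norm_num [one_div_twentyFive_le_gaussianPDFReal_two]
        _ ≤ p 1 := gaussianPDFReal_add_one_le_measureReal zero_le_one
        _ ≤ _ := le_one_sub_one_sub_pow measureReal_nonneg measureReal_le_one (by omega)
    nlinarith [h_tail 1 zero_le_one, mul_le_mul_of_nonneg_left hp (hb0 k),
      mul_le_mul_of_nonneg_right hk (hb0 k)]
  · set t := gaussianWeight k / 2 - 1 with ht_def
    have ht : 1 ≤ t := by linarith
    have hmp : 1 ≤ (((k : ℕ) + 1 : ℕ) : ℝ) * p t :=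
      calc (1 : ℝ) ≤ ((k : ℝ) + 1) * gaussianPDFReal 0 1 (t + 1) := by
            simpa [t] using one_le_mul_gaussianPDFReal_gaussianWeight_div_two hk
        _ ≤ _ := by
            push_cast
            gcongr
            exact gaussianPDFReal_add_one_le_measureReal (by linarith)
    have hp := half_le_one_sub_one_sub_pow measureReal_le_one hmp
    nlinarith [h_tail t (by linarith), mul_le_mul_of_nonneg_left hp
      (mul_nonneg (hb0 k) (by linarith : 0 ≤ t)), mul_le_mul_of_nonneg_right ht (hb0 k)]

lemma le_integral_iSup_mul_abs [IsProbabilityMeasure μ] {n : ℕ} {b : Fin n → ℝ}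
    {h : Fin n → Ω → ℝ} (hb : Antitone b) (hb0 : ∀ k, 0 ≤ b k)
    (hh : ∀ k, HasLaw (h k) (gaussianReal 0 1) μ) (hind : iIndepFun h μ) :
    1 / 100 * ⨆ k : Fin n, gaussianWeight k * b k ≤ ∫ ω, ⨆ j, b j * |h j ω| ∂μ := by
  have := Real.iSup_le (gaussianWeight_mul_le_integral_iSup_mul_abs hb hb0 hh hind)
    (mul_nonneg (by norm_num) (integral_nonneg fun ω ↦ Real.iSup_nonneg fun j ↦
      mul_nonneg (hb0 j) (abs_nonneg _)))
  linarith

end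

theorem expected_max_gaussian :
    ∃ c C : ℝ, 0 < c ∧ 0 < C ∧
      ∀ (n : ℕ), 0 < n →
      ∀ (a : Fin n → ℝ)
        (Ω : Type) (_ : MeasurableSpace Ω) (μ : Measure Ω) (_ : IsProbabilityMeasure μ)
        (g : Fin n → Ω → ℝ),
        (∀ i, Measurable (g i)) →
        (∀ i, μ.map (g i) = gaussianReal 0 1) →
        iIndepFun g μ →
        -- `astar` is the decreasing rearrangement of `(|a i|)`
        ∀ (astar : Fin n → ℝ) (σ : Equiv.Perm (Fin n)),
          Antitone astar → (∀ i, astar i = |a (σ i)|) →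
          c * (⨆ i : Fin n, Real.sqrt (Real.log ((i : ℕ) + 1 + 3)) * astar i)
              ≤ ∫ ω, ⨆ i, |a i * g i ω| ∂μ ∧
          (∫ ω, ⨆ i, |a i * g i ω| ∂μ)
              ≤ C * ⨆ i : Fin n, Real.sqrt (Real.log ((i : ℕ) + 1 + 3)) * astar i := by
  refine ⟨1 / 100, 5 / 2, by norm_num, by norm_num, ?_⟩
  intro n _ a Ω _ μ _ g hgm hglaw hgind astar σ hanti hastar
  have hastar0 : ∀ k, 0 ≤ astar k := fun k ↦ hastar k ▸ abs_nonneg _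
  have hlaw : ∀ k, HasLaw (g (σ k)) (gaussianReal 0 1) μ := fun k ↦
    ⟨(hgm _).aemeasurable, hglaw _⟩
  have h_sorted : ∀ ω, ⨆ i, |a i * g i ω| = ⨆ k, astar k * |g (σ k) ω| := fun ω ↦ by
    rw [← σ.iSup_comp]
    simp only [abs_mul, hastar]
  simp only [h_sorted]
  exact ⟨le_integral_iSup_mul_abs hanti hastar0 hlaw (hgind.precomp σ.injective),
    integral_iSup_mul_abs_le hastar0 hlaw⟩
end

section
/- Let 1 < p* ≤ 2 and let n be a positive integer. Then for all x, y ∈ ℝ^n one has ‖(x+y)/2‖_{p*}^2 + (p*(p*−1)/8) · ‖(x−y)/2‖_{p*}^2 ≤ ( ‖x‖_{p*}^2 + ‖y‖_{p*}^2 ) / 2, where ‖·‖_{p*} denotes the ℓ_{p*}-norm on ℝ^n. In particular, ℓ_{p*}^n has modulus of convexity of power type 2 with constant λ satisfying λ^{−2} = p*(p*−1)/8. -/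
/-!
Write `K = p(p-1)/8` and `r = p/2 ∈ (1/2, 1]`. Coordinatewise, midpoint convexity of
`x ↦ x ^ p - (p(p-1)/2) x²` on `[0, 1]` combined with the tangent-line bound for the concave
function `s ↦ s ^ r` gives the scalar two-point inequality
`(((a+b)/2)² + K ((a-b)/2)²) ^ r ≤ (|a| ^ p + |b| ^ p) / 2`.
Since `‖z‖_p² = ‖z²‖_r` and `‖·‖_r` satisfies the reverse triangle inequality on
nonnegative vectors (`r ≤ 1`), summing over coordinates bounds the left-hand side by
`((‖x‖_p^p + ‖y‖_p^p)/2) ^ (2/p)`, and convexity of `t ↦ t ^ (2/p)` finishes.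
-/

open Real

/-- The ℓ_p norm of a vector in ℝ^n, for a real exponent `p`. -/
noncomputable def pnorm (p : ℝ) {n : ℕ} (x : Fin n → ℝ) : ℝ :=
  (∑ j, |x j| ^ p) ^ (1 / p)

open Finset

section Scalar

variable {p : ℝ}

lemma convexOn_rpow_sub_mul_sq (hp1 : 1 ≤ p) (hp2 : p ≤ 2) :
    ConvexOn ℝ (Set.Icc 0 1) fun x : ℝ => x ^ p - p * (p - 1) / 2 * x ^ 2 := by
  refine convexOn_of_hasDerivWithinAt2_nonneg (convex_Icc 0 1)
    (f' := fun x => p * x ^ (p - 1) - p * (p - 1) / 2 * (2 * x))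
    (f'' := fun x => p * ((p - 1) * x ^ (p - 1 - 1)) - p * (p - 1) / 2 * 2) ?_ ?_ ?_ ?_
  · exact ((continuous_id.rpow_const fun _ => Or.inr (by linarith)).sub
      (continuous_const.mul (continuous_pow 2))).continuousOn
  all_goals intro x hx; rw [interior_Icc] at hx
  · refine ((hasDerivAt_rpow_const (Or.inl hx.1.ne')).sub
      ((hasDerivAt_pow 2 x).const_mul _) |>.congr_deriv ?_).hasDerivWithinAt
    ring
  · exact (((hasDerivAt_rpow_const (Or.inl hx.1.ne')).const_mul p).sub
      ((hasDerivAt_id x).const_mul 2 |>.const_mul _) |>.congr_deriv (by simp)).hasDerivWithinAt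
  · have hx1 : 1 ≤ x ^ (p - 1 - 1) :=
      one_le_rpow_of_pos_of_le_one_of_nonpos hx.1 hx.2.le (by linarith)
    have hp : 0 ≤ p * (p - 1) := by nlinarith
    show 0 ≤ p * ((p - 1) * x ^ (p - 1 - 1)) - p * (p - 1) / 2 * 2
    nlinarith

lemma rpow_midpoint_add_mul_sq_le (hp1 : 1 ≤ p) (hp2 : p ≤ 2) {t : ℝ} (ht0 : 0 ≤ t)
    (ht1 : t ≤ 1) :
    ((1 + t) / 2) ^ p + p * (p - 1) / 8 * (1 - t) ^ 2 ≤ (1 + t ^ p) / 2 := by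
  have h := (convexOn_rpow_sub_mul_sq hp1 hp2).2 ⟨zero_le_one, le_rfl⟩ ⟨ht0, ht1⟩
    (by norm_num : (0 : ℝ) ≤ 1 / 2) (by norm_num : (0 : ℝ) ≤ 1 / 2) (by norm_num)
  simp only [smul_eq_mul, one_rpow] at h
  rw [show (1 / 2 : ℝ) * 1 + 1 / 2 * t = (1 + t) / 2 by ring] at h
  linarith

lemma rpow_add_le_add_mul_rpow_sub_one {r a w : ℝ} (hr0 : 0 ≤ r) (hr1 : r ≤ 1) (ha : 0 < a)
    (hw : 0 ≤ w) : (a + w) ^ r ≤ a ^ r + r * a ^ (r - 1) * w := by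
  have hbern : (1 + w / a) ^ r ≤ 1 + r * (w / a) :=
    rpow_one_add_le_one_add_mul_self (by linarith [div_nonneg hw ha.le]) hr0 hr1
  calc (a + w) ^ r = a ^ r * (1 + w / a) ^ r := by
        rw [← mul_rpow ha.le (by positivity), mul_one_add, mul_div_cancel₀ _ ha.ne']
    _ ≤ a ^ r * (1 + r * (w / a)) := by gcongr
    _ = a ^ r + r * a ^ (r - 1) * w := by rw [rpow_sub_one ha.ne']; field_simp

lemma sq_rpow_div_two (z p : ℝ) : (z ^ 2) ^ (p / 2) = |z| ^ p := by
  rw [← sq_abs, ← rpow_natCast, ← rpow_mul (abs_nonneg z)]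
  ring_nf

lemma two_point_rpow_le_of_le_one (hp1 : 1 ≤ p) (hp2 : p ≤ 2) {t : ℝ} (ht0 : 0 ≤ t)
    (ht1 : t ≤ 1) :
    (((1 + t) / 2) ^ 2 + p * (p - 1) / 8 * ((1 - t) / 2) ^ 2) ^ (p / 2)
      ≤ (1 + t ^ p) / 2 := by
  have hK : 0 ≤ p * (p - 1) / 8 := by nlinarith
  have hA : 1 / 4 ≤ ((1 + t) / 2) ^ 2 := by nlinarith
  have hA1 : ((1 + t) / 2) ^ 2 ≤ 1 := by nlinarith
  have hquad : p / 2 * 4 * (p * (p - 1) / 8 * ((1 - t) / 2) ^ 2)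
      ≤ p * (p - 1) / 8 * (1 - t) ^ 2 := by
    nlinarith [mul_nonneg hK (sq_nonneg (1 - t))]
  set A := ((1 + t) / 2) ^ 2
  set w := p * (p - 1) / 8 * ((1 - t) / 2) ^ 2
  have hw : 0 ≤ w := by positivity
  have hApow : A ^ (p / 2 - 1) ≤ 4 :=
    calc A ^ (p / 2 - 1) ≤ A ^ (-1 : ℝ) :=
          rpow_le_rpow_of_exponent_ge (by linarith) hA1 (by linarith)
      _ ≤ 4 := by rw [rpow_neg_one]; exact inv_le_of_inv_le₀ (by norm_num) (by linarith)
  calc (A + w) ^ (p / 2) ≤ A ^ (p / 2) + p / 2 * A ^ (p / 2 - 1) * w :=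
        rpow_add_le_add_mul_rpow_sub_one (by linarith) (by linarith) (by linarith) hw
    _ ≤ ((1 + t) / 2) ^ p + p * (p - 1) / 8 * (1 - t) ^ 2 := by
        rw [sq_rpow_div_two, abs_of_nonneg (by linarith)]
        have : p / 2 * A ^ (p / 2 - 1) * w ≤ p / 2 * 4 * w := by gcongr
        linarith
    _ ≤ (1 + t ^ p) / 2 := rpow_midpoint_add_mul_sq_le hp1 hp2 ht0 ht1

lemma two_point_rpow_le_of_le (hp1 : 1 ≤ p) (hp2 : p ≤ 2) {a b : ℝ} (hb : 0 ≤ b)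
    (hba : b ≤ a) :
    (((a + b) / 2) ^ 2 + p * (p - 1) / 8 * ((a - b) / 2) ^ 2) ^ (p / 2)
      ≤ (a ^ p + b ^ p) / 2 := by
  obtain rfl | ha := (hb.trans hba).eq_or_lt
  · obtain rfl : b = 0 := le_antisymm hba hb
    simp [zero_rpow (by linarith : p ≠ 0), zero_rpow (by linarith : p / 2 ≠ 0)]
  set t := b / a
  have hbt : b = a * t := (mul_div_cancel₀ b ha.ne').symm
  have hscale : ((a + b) / 2) ^ 2 + p * (p - 1) / 8 * ((a - b) / 2) ^ 2
      = a ^ 2 * (((1 + t) / 2) ^ 2 + p * (p - 1) / 8 * ((1 - t) / 2) ^ 2) := by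
    rw [hbt]; ring
  have ht0 : 0 ≤ t := div_nonneg hb ha.le
  have hK : 0 ≤ p * (p - 1) / 8 := by nlinarith
  rw [hscale, mul_rpow (sq_nonneg a) (by positivity), sq_rpow_div_two, abs_of_pos ha, hbt,
    mul_rpow ha.le ht0]
  have := two_point_rpow_le_of_le_one hp1 hp2 ht0 ((div_le_one ha).2 hba)
  calc a ^ p * _ ≤ a ^ p * ((1 + t ^ p) / 2) := by gcongr
    _ = _ := by ring

lemma two_point_rpow_le (hp1 : 1 ≤ p) (hp2 : p ≤ 2) (a b : ℝ) :
    (((a + b) / 2) ^ 2 + p * (p - 1) / 8 * ((a - b) / 2) ^ 2) ^ (p / 2)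
      ≤ (|a| ^ p + |b| ^ p) / 2 := by
  have hK0 : 0 ≤ p * (p - 1) / 8 := by nlinarith
  have hK1 : p * (p - 1) / 8 ≤ 1 := by nlinarith
  set K := p * (p - 1) / 8
  have habs : ((a + b) / 2) ^ 2 + K * ((a - b) / 2) ^ 2
      ≤ ((|a| + |b|) / 2) ^ 2 + K * ((|a| - |b|) / 2) ^ 2 := by
    have : a * b ≤ |a| * |b| := abs_mul a b ▸ le_abs_self _
    nlinarith [sq_abs a, sq_abs b]
  refine (rpow_le_rpow (by positivity) habs (by linarith)).trans ?_
  rcases le_total |b| |a| with h | h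
  · exact two_point_rpow_le_of_le hp1 hp2 (abs_nonneg b) h
  · rw [show ((|a| + |b|) / 2) ^ 2 + K * ((|a| - |b|) / 2) ^ 2
        = ((|b| + |a|) / 2) ^ 2 + K * ((|b| - |a|) / 2) ^ 2 by ring, add_comm (|a| ^ p)]
    exact two_point_rpow_le_of_le hp1 hp2 (abs_nonneg a) h

end Scalar

lemma rpow_one_sub_mul_rpow_add_le_rpow_add {r s t a b : ℝ} (hr0 : 0 ≤ r) (hr1 : r ≤ 1)
    (hs : 0 < s) (ht : 0 < t) (hst : s + t = 1) (ha : 0 ≤ a) (hb : 0 ≤ b) :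
    s ^ (1 - r) * a ^ r + t ^ (1 - r) * b ^ r ≤ (a + b) ^ r := by
  have h :=
    (concaveOn_rpow hr0 hr1).2 (div_nonneg ha hs.le) (div_nonneg hb ht.le) hs.le ht.le hst
  have hweight : ∀ {c x : ℝ}, 0 < c → 0 ≤ x → c * (x / c) ^ r = c ^ (1 - r) * x ^ r := by
    intro c x hc hx
    rw [div_rpow hx hc.le, rpow_sub hc, rpow_one]
    field_simp
  simpa only [smul_eq_mul, mul_div_cancel₀ _ hs.ne', mul_div_cancel₀ _ ht.ne', hweight hs ha,
    hweight ht hb] using h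

section Pnorm

variable {n : ℕ}

lemma pnorm_nonneg (p : ℝ) (z : Fin n → ℝ) : 0 ≤ pnorm p z :=
  rpow_nonneg (sum_nonneg fun _ _ => rpow_nonneg (abs_nonneg _) _) _

lemma pnorm_rpow {p : ℝ} (hp : p ≠ 0) (z : Fin n → ℝ) :
    pnorm p z ^ p = ∑ j, |z j| ^ p := by
  rw [pnorm, ← rpow_mul (sum_nonneg fun _ _ => rpow_nonneg (abs_nonneg _) _),
    one_div_mul_cancel hp, rpow_one]

lemma sq_pnorm (p : ℝ) (z : Fin n → ℝ) : pnorm p z ^ 2 = (∑ j, |z j| ^ p) ^ (2 / p) := by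
  rw [pnorm, ← rpow_natCast, ← rpow_mul (sum_nonneg fun _ _ => rpow_nonneg (abs_nonneg _) _)]
  ring_nf

lemma sq_pnorm_eq_pnorm_sq (p : ℝ) (z : Fin n → ℝ) :
    pnorm p z ^ 2 = pnorm (p / 2) fun j => z j ^ 2 := by
  rw [sq_pnorm, pnorm]
  simp only [abs_sq, sq_rpow_div_two, one_div_div]

lemma pnorm_const_mul {p : ℝ} (hp : p ≠ 0) (c : ℝ) (z : Fin n → ℝ) :
    pnorm p (fun j => c * z j) = |c| * pnorm p z := by
  simp only [pnorm, abs_mul, mul_rpow (abs_nonneg c) (abs_nonneg _), ← mul_sum]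
  rw [mul_rpow (rpow_nonneg (abs_nonneg c) _)
      (sum_nonneg fun _ _ => rpow_nonneg (abs_nonneg _) _), ← rpow_mul (abs_nonneg c),
    mul_one_div_cancel hp, rpow_one]

lemma pnorm_mono {p : ℝ} (hp : 0 < p) {f g : Fin n → ℝ} (hf : 0 ≤ f) (hfg : f ≤ g) :
    pnorm p f ≤ pnorm p g := by
  unfold pnorm
  gcongr with j
  · exact hf j
  · exact hfg j

lemma pnorm_add_pnorm_le_pnorm_add {r : ℝ} (hr0 : 0 < r) (hr1 : r ≤ 1) {f g : Fin n → ℝ}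
    (hf : 0 ≤ f) (hg : 0 ≤ g) : pnorm r f + pnorm r g ≤ pnorm r (f + g) := by
  rcases (pnorm_nonneg r f).eq_or_lt with hA | hA
  · rw [← hA, zero_add]
    exact pnorm_mono hr0 hg (le_add_of_nonneg_left hf)
  rcases (pnorm_nonneg r g).eq_or_lt with hB | hB
  · rw [← hB, add_zero]
    exact pnorm_mono hr0 hf (le_add_of_nonneg_right hg)
  set A := pnorm r f
  set B := pnorm r g
  have hAB : 0 < A + B := add_pos hA hB
  have hsum_rpow {h : Fin n → ℝ} (hh : 0 ≤ h) : ∑ j, h j ^ r = pnorm r h ^ r := by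
    simp only [pnorm_rpow hr0.ne', abs_of_nonneg (hh _)]
  have hconc : (A / (A + B)) ^ (1 - r) * A ^ r + (B / (A + B)) ^ (1 - r) * B ^ r
      ≤ pnorm r (f + g) ^ r := by
    rw [← hsum_rpow hf, ← hsum_rpow hg, ← hsum_rpow (add_nonneg hf hg), mul_sum, mul_sum,
      ← sum_add_distrib]
    exact sum_le_sum fun j _ => rpow_one_sub_mul_rpow_add_le_rpow_add hr0.le hr1
      (div_pos hA hAB) (div_pos hB hAB) (by field_simp) (hf j) (hg j)
  have hweights : (A / (A + B)) ^ (1 - r) * A ^ r + (B / (A + B)) ^ (1 - r) * B ^ r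
      = (A + B) ^ r := by
    rw [div_rpow hA.le hAB.le, div_rpow hB.le hAB.le, div_mul_eq_mul_div, div_mul_eq_mul_div,
      ← rpow_add hA, ← rpow_add hB, sub_add_cancel, rpow_one, rpow_one, ← add_div,
      rpow_sub hAB, rpow_one]
    field_simp
  rw [← rpow_le_rpow_iff hAB.le (pnorm_nonneg r _) hr0, ← hweights]
  exact hconc

end Pnorm

lemma add_div_two_rpow_le {q a b : ℝ} (hq : 1 ≤ q) (ha : 0 ≤ a) (hb : 0 ≤ b) :
    ((a + b) / 2) ^ q ≤ (a ^ q + b ^ q) / 2 := by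
  have h := (convexOn_rpow hq).2 ha hb (by norm_num : (0 : ℝ) ≤ 1 / 2)
    (by norm_num : (0 : ℝ) ≤ 1 / 2) (add_halves 1)
  simp only [smul_eq_mul] at h
  calc ((a + b) / 2) ^ q = (1 / 2 * a + 1 / 2 * b) ^ q := by ring_nf
    _ ≤ 1 / 2 * a ^ q + 1 / 2 * b ^ q := h
    _ = (a ^ q + b ^ q) / 2 := by ring

theorem clarkson_two_point_general
    (pstar : ℝ) (hp1 : 1 < pstar) (hp2 : pstar ≤ 2)
    (n : ℕ) (x y : Fin n → ℝ) :
    pnorm pstar (fun j => (x j + y j) / 2) ^ 2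
        + (pstar * (pstar - 1) / 8) * pnorm pstar (fun j => (x j - y j) / 2) ^ 2
      ≤ (pnorm pstar x ^ 2 + pnorm pstar y ^ 2) / 2 := by
  have hK : 0 ≤ pstar * (pstar - 1) / 8 := by nlinarith
  set Sx := ∑ j, |x j| ^ pstar
  set Sy := ∑ j, |y j| ^ pstar
  set u : Fin n → ℝ := fun j => ((x j + y j) / 2) ^ 2
  set v : Fin n → ℝ := fun j => pstar * (pstar - 1) / 8 * ((x j - y j) / 2) ^ 2
  have hu : 0 ≤ u := fun j => sq_nonneg _
  have hv : 0 ≤ v := fun j => mul_nonneg hK (sq_nonneg _)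
  have hcoord : ∑ j, (u j + v j) ^ (pstar / 2) ≤ (Sx + Sy) / 2 := by
    rw [← sum_add_distrib, sum_div]
    exact sum_le_sum fun j _ => two_point_rpow_le hp1.le hp2 (x j) (y j)
  calc _ = pnorm (pstar / 2) u + pnorm (pstar / 2) v := by
        rw [sq_pnorm_eq_pnorm_sq, sq_pnorm_eq_pnorm_sq, pnorm_const_mul (by linarith),
          abs_of_nonneg hK]
    _ ≤ pnorm (pstar / 2) (u + v) :=
        pnorm_add_pnorm_le_pnorm_add (by linarith) (by linarith) hu hv
    _ = (∑ j, (u j + v j) ^ (pstar / 2)) ^ (2 / pstar) := by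
        simp only [pnorm, Pi.add_apply, abs_of_nonneg (add_nonneg (hu _) (hv _)), one_div_div]
    _ ≤ ((Sx + Sy) / 2) ^ (2 / pstar) := by gcongr
    _ ≤ (Sx ^ (2 / pstar) + Sy ^ (2 / pstar)) / 2 :=
        add_div_two_rpow_le ((one_le_div (by linarith)).2 hp2) (by positivity) (by positivity)
    _ = _ := by rw [sq_pnorm, sq_pnorm]

theorem clarkson_two_point
    (pstar : ℝ) (hp1 : 1 < pstar) (hp2 : pstar ≤ 2)
    (n : ℕ) (hn : 0 < n) (x y : Fin n → ℝ) :
    pnorm pstar (fun j => (x j + y j) / 2) ^ 2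
        + (pstar * (pstar - 1) / 8) * pnorm pstar (fun j => (x j - y j) / 2) ^ 2
      ≤ (pnorm pstar x ^ 2 + pnorm pstar y ^ 2) / 2 :=
  clarkson_two_point_general pstar hp1 hp2 n x y
end

section
/- There exists an absolute constant c > 0 such that the following holds. Let m, n be positive integers, let A = (a_{ij}) be a real m×n matrix, let b_i := max_{j≤n} |a_{ij}| for i ≤ m, and let (b_i^*)_{i≤m} denote the decreasing rearrangement of (b_i)_{i≤m}. Then, with g_{ij} independent standard Gaussian random variables, E max_{i≤m, j≤n} |a_{ij} g_{ij}| ≥ c · max_{i≤m} √(log(i+3)) · b_i^*. -/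
/-!
Let `k` maximise `√(log (k + 4)) * b*_k`. The rows `σ 0, …, σ k` each contain an entry of modulus
at least `b*_k`, at distinct positions, so the maximum dominates `b*_k` times the maximum of
`k + 1` independent standard Gaussians. At the level `t = √(log (k + 4) / 2)` a standard Gaussian
exceeds `t` with probability `≳ (k + 4)^(-1/2)`, so one of the `k + 1` exceeds `t` with
probability bounded below by an absolute constant, and Markov's inequality gives
`E max ≳ t * b*_k`.
-/

open MeasureTheory ProbabilityTheory Real

lemma one_sub_pow_le_inv_one_add_mul {p : ℝ} (hp0 : 0 ≤ p) (hp1 : p ≤ 1) (N : ℕ) :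
    (1 - p) ^ N ≤ (1 + N * p)⁻¹ := by
  calc (1 - p) ^ N ≤ exp (-p) ^ N := pow_le_pow_left₀ (by linarith) (one_sub_le_exp_neg p) N
    _ = (exp (N * p))⁻¹ := by rw [← exp_nat_mul, ← exp_neg, mul_neg]
    _ ≤ (1 + N * p)⁻¹ := by
        gcongr
        linarith [add_one_le_exp (N * p)]

lemma exp_neg_half_sq_add_one_div_le_gaussianReal_Ici {t : ℝ} (ht : 0 ≤ t) :
    exp (-(t + 1) ^ 2 / 2) / √(2 * π) ≤ (gaussianReal 0 1).real (Set.Ici t) := by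
  have hpdf : ∀ x ∈ Set.Icc t (t + 1),
      exp (-(t + 1) ^ 2 / 2) / √(2 * π) ≤ gaussianPDFReal 0 1 x := by
    rintro x ⟨htx, hxt⟩
    rw [gaussianPDFReal_def, div_eq_inv_mul]
    simp only [NNReal.coe_one, mul_one, sub_zero]
    gcongr
    nlinarith
  calc exp (-(t + 1) ^ 2 / 2) / √(2 * π)
      = exp (-(t + 1) ^ 2 / 2) / √(2 * π) * volume.real (Set.Icc t (t + 1)) := by simp
    _ ≤ ∫ x in Set.Icc t (t + 1), gaussianPDFReal 0 1 x :=
        setIntegral_ge_of_const_le_real measurableSet_Icc (by simp) hpdf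
          (integrable_gaussianPDFReal 0 1).integrableOn
    _ ≤ ∫ x in Set.Ici t, gaussianPDFReal 0 1 x :=
        setIntegral_mono_set (integrable_gaussianPDFReal 0 1).integrableOn
          (ae_of_all _ (gaussianPDFReal_nonneg 0 1)) (ae_of_all _ Set.Icc_subset_Ici_self)
    _ = (gaussianReal 0 1).real (Set.Ici t) := by
        rw [measureReal_def, gaussianReal_apply_eq_integral 0 one_ne_zero,
          ENNReal.toReal_ofReal (setIntegral_nonneg measurableSet_Ici
            fun x _ ↦ gaussianPDFReal_nonneg 0 1 x)]

lemma inv_div_sqrt_le_gaussianReal_Ici_sqrt_log {v : ℝ} (hv : 1 ≤ v) :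
    (exp 1 * √(2 * π))⁻¹ / √v ≤ (gaussianReal 0 1).real (Set.Ici √(log v / 2)) := by
  set t := √(log v / 2)
  have ht2 : t ^ 2 = log v / 2 := sq_sqrt (by linarith [log_nonneg hv])
  have hsqrt : exp (log v / 2) = √v := by rw [exp_half, exp_log (by linarith)]
  calc (exp 1 * √(2 * π))⁻¹ / √v = exp (-(log v / 2) - 1) / √(2 * π) := by
        rw [sub_eq_add_neg, exp_add, exp_neg, exp_neg, hsqrt]
        field_simp
    _ ≤ exp (-(t + 1) ^ 2 / 2) / √(2 * π) := by
        gcongr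
        nlinarith [sq_nonneg (t - 1)]
    _ ≤ (gaussianReal 0 1).real (Set.Ici t) :=
        exp_neg_half_sq_add_one_div_le_gaussianReal_Ici (sqrt_nonneg _)

variable {Ω ι : Type*} [MeasurableSpace Ω] {μ : Measure Ω}

lemma integrable_of_map_eq_gaussianReal {X : Ω → ℝ} (hX : Measurable X) {m : ℝ} {v : NNReal}
    (hlaw : μ.map X = gaussianReal m v) : Integrable X μ := by
  have h : Integrable id (μ.map X) := hlaw ▸ memLp_one_iff_integrable.mp (by
    simpa using memLp_id_gaussianReal (μ := m) (v := v) 1)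
  exact (integrable_map_measure aestronglyMeasurable_id hX.aemeasurable).mp h

lemma integrable_iSup_of_nonneg [Fintype ι] {f : ι → Ω → ℝ} (hf : ∀ i, Integrable (f i) μ)
    (hf0 : ∀ i, 0 ≤ f i) : Integrable (fun ω ↦ ⨆ i, f i ω) μ := by
  refine (integrable_finsetSum Finset.univ fun i _ ↦ hf i).mono
    (AEMeasurable.iSup fun i ↦ (hf i).aemeasurable).aestronglyMeasurable (ae_of_all _ fun ω ↦ ?_)
  have hsum : 0 ≤ ∑ i, f i ω := Finset.sum_nonneg fun i _ ↦ hf0 i ω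
  rw [norm_of_nonneg (Real.iSup_nonneg fun i ↦ hf0 i ω), norm_of_nonneg hsum]
  exact Real.iSup_le (fun i ↦ Finset.single_le_sum (fun i _ ↦ hf0 i ω) (Finset.mem_univ i)) hsum

variable [IsProbabilityMeasure μ]

lemma measureReal_exists_le_eq_one_sub_pow {ν : Measure ℝ} [IsProbabilityMeasure ν]
    {g : ι → Ω → ℝ} (hmeas : ∀ i, Measurable (g i)) (hlaw : ∀ i, μ.map (g i) = ν)
    (hind : iIndepFun g μ) (T : Finset ι) (t : ℝ) :
    μ.real {ω | ∃ i ∈ T, t ≤ g i ω} = 1 - (1 - ν.real (Set.Ici t)) ^ T.card := by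
  have hcompl : {ω | ∃ i ∈ T, t ≤ g i ω}ᶜ = ⋂ i ∈ T, g i ⁻¹' Set.Iio t := by
    ext ω; simp
  have hfactor : ∀ i, μ.real (g i ⁻¹' Set.Iio t) = 1 - ν.real (Set.Ici t) := fun i ↦ by
    rw [← map_measureReal_apply (hmeas i) measurableSet_Iio, hlaw, ← Set.compl_Ici,
      probReal_compl_eq_one_sub measurableSet_Ici]
  have hinter : μ.real (⋂ i ∈ T, g i ⁻¹' Set.Iio t) = (1 - ν.real (Set.Ici t)) ^ T.card := by
    rw [measureReal_def, hind.meas_biInter fun i _ ↦ ⟨Set.Iio t, measurableSet_Iio, rfl⟩,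
      ENNReal.toReal_prod]
    simp only [← measureReal_def, hfactor, Finset.prod_const]
  have hmeasSet : MeasurableSet {ω | ∃ i ∈ T, t ≤ g i ω} :=
    .of_compl (hcompl ▸ T.measurableSet_biInter fun i _ ↦ hmeas i measurableSet_Iio)
  rw [← hinter, ← hcompl, probReal_compl_eq_one_sub hmeasSet, sub_sub_cancel]

theorem mul_sqrt_log_card_le_integral {g : ι → Ω → ℝ} (hmeas : ∀ i, Measurable (g i))
    (hlaw : ∀ i, μ.map (g i) = gaussianReal 0 1) (hind : iIndepFun g μ) {T : Finset ι}
    (hT : T.Nonempty) {S : Ω → ℝ} (hS0 : 0 ≤ S) (hSint : Integrable S μ) {b : ℝ} (hb : 0 ≤ b)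
    (hbS : ∀ ω, ∀ i ∈ T, b * g i ω ≤ S ω) :
    (exp 1 * √(2 * π))⁻¹ / (4 * √2) * (√(log (T.card + 3)) * b) ≤ ∫ ω, S ω ∂μ := by
  set C := (exp 1 * √(2 * π))⁻¹
  have hC0 : 0 < C := by positivity
  have hC1 : C ≤ 1 := inv_le_one_of_one_le₀ <| one_le_mul_of_one_le_of_one_le
    (one_le_exp zero_le_one) (one_le_sqrt.mpr (by linarith [pi_gt_three]))
  set N := T.card
  have hN : (1 : ℝ) ≤ N := Nat.one_le_cast.mpr hT.card_pos
  set t := √(log (N + 3) / 2)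
  set p := (gaussianReal 0 1).real (Set.Ici t)
  have hp : C / √(N + 3) ≤ p := inv_div_sqrt_le_gaussianReal_Ici_sqrt_log (by linarith)
  have hNp : C / 2 ≤ N * p := calc
    C / 2 = N * (C / (2 * N)) := by field_simp
    _ ≤ N * (C / √(N + 3)) := by
      gcongr
      exact sqrt_le_iff.mpr ⟨by linarith, by nlinarith⟩
    _ ≤ N * p := by gcongr
  have hprob : C / 4 ≤ μ.real {ω | ∃ i ∈ T, t ≤ g i ω} := by
    rw [measureReal_exists_le_eq_one_sub_pow hmeas hlaw hind]
    have hpow := one_sub_pow_le_inv_one_add_mul measureReal_nonneg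
      (measureReal_le_one (μ := gaussianReal 0 1) (s := Set.Ici t)) N
    have hinv : (1 + N * p)⁻¹ ≤ (1 + C / 2)⁻¹ := by gcongr
    have hC : (1 + C / 2)⁻¹ ≤ 1 - C / 4 := by
      rw [inv_le_iff_one_le_mul₀ (by positivity)]
      nlinarith
    linarith
  have hsub : {ω | ∃ i ∈ T, t ≤ g i ω} ⊆ {ω | t * b ≤ S ω} := by
    rintro ω ⟨i, hi, hti⟩
    calc t * b ≤ g i ω * b := by gcongr
      _ ≤ S ω := by rw [mul_comm]; exact hbS ω i hi
  have hlog : √(log (N + 3)) = √2 * t := by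
    rw [← sqrt_mul zero_le_two, mul_div_cancel₀ _ two_ne_zero]
  calc C / (4 * √2) * (√(log (N + 3)) * b) = t * b * (C / 4) := by
        rw [hlog]; field_simp
    _ ≤ t * b * μ.real {ω | ∃ i ∈ T, t ≤ g i ω} := by gcongr
    _ ≤ t * b * μ.real {ω | t * b ≤ S ω} :=
        mul_le_mul_of_nonneg_left (measureReal_mono hsub) (mul_nonneg (sqrt_nonneg _) hb)
    _ ≤ ∫ ω, S ω ∂μ := mul_meas_ge_le_integral_of_nonneg (ae_of_all _ hS0) hSint _

lemma exists_card_eq_forall_le_abs {m : ℕ} {κ : Type*} [Finite κ] [Nonempty κ]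
    (a : Matrix (Fin m) κ ℝ) {bstar : Fin m → ℝ} {σ : Equiv.Perm (Fin m)} (hanti : Antitone bstar)
    (hbstar : ∀ i, bstar i = ⨆ j, |a (σ i) j|) (k : Fin m) :
    ∃ T : Finset (Fin m × κ), T.card = (k : ℕ) + 1 ∧ ∀ p ∈ T, bstar k ≤ |a p.1 p.2| := by
  classical
  choose j hj using fun i : Fin m ↦ exists_eq_ciSup_of_finite (f := fun j ↦ |a (σ i) j|)
  refine ⟨(Finset.Iic k).image fun i ↦ (σ i, j i), ?_, ?_⟩
  · rw [Finset.card_image_of_injective _ fun i i' h ↦ σ.injective (congrArg Prod.fst h),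
      Fin.card_Iic]
  · simp only [Finset.mem_image, Finset.mem_Iic]
    rintro _ ⟨i, hik, rfl⟩
    exact (hanti hik).trans_eq ((hbstar i).trans (hj i).symm)

theorem max_entry_lower_bound :
    ∃ c : ℝ, 0 < c ∧
      ∀ (m n : ℕ), 0 < m → 0 < n →
      ∀ (a : Matrix (Fin m) (Fin n) ℝ)
        (Ω : Type) (_ : MeasurableSpace Ω) (μ : Measure Ω) (_ : IsProbabilityMeasure μ)
        (g : Fin m × Fin n → Ω → ℝ),
        (∀ ij, Measurable (g ij)) →
        (∀ ij, μ.map (g ij) = gaussianReal 0 1) →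
        iIndepFun g μ →
        -- `bstar` is the decreasing rearrangement of the row maxima `b i = max_j |a i j|`
        ∀ (bstar : Fin m → ℝ) (σ : Equiv.Perm (Fin m)),
          Antitone bstar → (∀ i, bstar i = ⨆ j, |a (σ i) j|) →
          c * (⨆ i : Fin m, Real.sqrt (Real.log ((i : ℕ) + 1 + 3)) * bstar i)
            ≤ ∫ ω, ⨆ ij : Fin m × Fin n, |a ij.1 ij.2 * g ij ω| ∂μ := by
  refine ⟨(exp 1 * √(2 * π))⁻¹ / (4 * √2), by positivity, ?_⟩
  intro m n hm hn a Ω _ μ _ g hmeas hlaw hind bstar σ hanti hbstar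
  have : Nonempty (Fin m) := ⟨⟨0, hm⟩⟩
  have : Nonempty (Fin n) := ⟨⟨0, hn⟩⟩
  obtain ⟨k, hk⟩ := exists_eq_ciSup_of_finite
    (f := fun i : Fin m ↦ √(log ((i : ℕ) + 1 + 3)) * bstar i)
  obtain ⟨T, hTcard, hTle⟩ := exists_card_eq_forall_le_abs a hanti hbstar k
  have hb : 0 ≤ bstar k := hbstar k ▸ Real.iSup_nonneg fun _ ↦ abs_nonneg _
  have hbS (ω) : ∀ p ∈ T, bstar k * g p ω ≤ ⨆ ij : Fin m × Fin n, |a ij.1 ij.2 * g ij ω| :=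
    fun p hp ↦ calc
      bstar k * g p ω ≤ bstar k * |g p ω| := mul_le_mul_of_nonneg_left (le_abs_self _) hb
      _ ≤ |a p.1 p.2 * g p ω| := abs_mul (a p.1 p.2) _ ▸
        mul_le_mul_of_nonneg_right (hTle p hp) (abs_nonneg _)
      _ ≤ _ := le_ciSup (f := fun ij : Fin m × Fin n ↦ |a ij.1 ij.2 * g ij ω|)
        (Set.finite_range _).bddAbove p
  have hS := integrable_iSup_of_nonneg (fun p ↦
    ((integrable_of_map_eq_gaussianReal (hmeas p) (hlaw p)).const_mul (a p.1 p.2)).abs)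
    fun p ω ↦ abs_nonneg (a p.1 p.2 * g p ω)
  have hT : T.Nonempty := Finset.card_pos.mp (hTcard ▸ Nat.succ_pos _)
  have := mul_sqrt_log_card_le_integral hmeas hlaw hind hT
    (fun ω ↦ Real.iSup_nonneg fun _ ↦ abs_nonneg _) hS hb hbS
  rw [← hk]
  convert this using 5
  rw [hTcard]; push_cast; ring
end
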